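/- arXiv:1104.4752 — 3 statements merged into one kernel-verified Lean document; each statement's English description precedes it below -/
import Mathlib

section
/- Let k be a finite field with q elements and characteristic 2, let n ≥ 1, and let W_n denote the T-space of k[x]_0 generated by {x + x^q, x^(q^n + 1)}. Then W_n equals the k-linear span of the set {x^i + x^(qi) : i ≥ 1} ∪ {x^((q^n+1)i) : i ≥ 1} ∪ {x^(q^n·i + j) + x^(i + q^n·j) : i > j ≥ 1}. -/
/-- A T-space of `k[x]₀`: a `k`-submodule of `k[x]` all of whose elements have zero
constant term, closed under substitution `p ↦ p ∘ g` for every polynomial `g` with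
zero constant term. -/
def IsTSpace (k : Type*) [Field k] (V : Submodule k (Polynomial k)) : Prop :=
  (∀ p ∈ V, p.coeff 0 = 0) ∧
    ∀ p ∈ V, ∀ g : Polynomial k, g.coeff 0 = 0 → p.comp g ∈ V

/-- The T-space of `k[x]₀` generated by a set `S`. -/
noncomputable def TSpaceGen (k : Type*) [Field k] (S : Set (Polynomial k)) : Submodule k (Polynomial k) :=
  sInf {V | IsTSpace k V ∧ S ⊆ (V : Set (Polynomial k))}

/-- A T-ideal of `k[x]₀`: a T-space closed under multiplication by polynomials with
zero constant term. -/
def IsTIdeal (k : Type*) [Field k] (V : Submodule k (Polynomial k)) : Prop :=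
  IsTSpace k V ∧ ∀ p ∈ V, ∀ g : Polynomial k, g.coeff 0 = 0 → p * g ∈ V

/-- The T-ideal of `k[x]₀` generated by a set `S`. -/
noncomputable def TIdealGen (k : Type*) [Field k] (S : Set (Polynomial k)) : Submodule k (Polynomial k) :=
  sInf {V | IsTIdeal k V ∧ S ⊆ (V : Set (Polynomial k))}

/-!
Over a field with `q` elements, `h ^ q ^ n = expand k (q ^ n) h` for every `h ∈ k[x]`, so the
maps `h ↦ h ^ q ^ n` are `k`-linear ring endomorphisms of `k[x]`. Substituting `g ∈ k[x]₀` into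
the three families gives `h + h ^ q`, `h ^ qⁿ * h` and `a ^ qⁿ * b + a * b ^ qⁿ` with `h, a, b` powers
of `g`. The first is linear and the third bilinear in its arguments, and the second is the
quadratic form whose polarisation is the third, so each lies in the span as soon as it does on
monomials, which is exactly what the three families provide. Conversely, the families are the
substitutions of `xⁱ` and `xⁱ + xʲ` into the two generators, up to elements already obtained.
-/

open Polynomial Submodule

section TSpaceGen

variable {k : Type*} [Field k] {S : Set k[X]}

theorem TSpaceGen_le {V : Submodule k k[X]} (hV : IsTSpace k V) (hS : S ⊆ V) :
    TSpaceGen k S ≤ V :=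
  sInf_le ⟨hV, hS⟩

theorem comp_mem_TSpaceGen {p g : k[X]} (hp : p ∈ S) (hg : g.coeff 0 = 0) :
    p.comp g ∈ TSpaceGen k S :=
  mem_sInf.mpr fun _ ⟨hV, hS⟩ => hV.2 p (hS hp) g hg

end TSpaceGen

section NonunitalPolynomials

variable (k : Type*) [Field k]

/-- `k[x]₀`, as a `k`-submodule of `k[x]`. -/
noncomputable def nonunitalPolynomials : Submodule k k[X] :=
  span k ((fun t : ℕ => (X : k[X]) ^ t) '' Set.Ici 1)

variable {k}

theorem mem_nonunitalPolynomials_iff {p : k[X]} :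
    p ∈ nonunitalPolynomials k ↔ p.coeff 0 = 0 := by
  constructor
  · intro hp
    have hle : nonunitalPolynomials k ≤ LinearMap.ker (lcoeff k 0) := by
      refine span_le.mpr (Set.image_subset_iff.mpr fun t (ht : 1 ≤ t) => ?_)
      simp [coeff_X_pow, (Nat.one_le_iff_ne_zero.mp ht).symm]
    simpa using hle hp
  · intro hp
    rw [p.as_sum_support]
    refine sum_mem fun t ht => ?_
    have ht : 1 ≤ t := Nat.one_le_iff_ne_zero.mpr fun h => mem_support_iff.mp (h ▸ ht) hp
    rw [← smul_X_eq_monomial]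
    exact smul_mem _ _ (subset_span ⟨t, ht, rfl⟩)

theorem pow_mem_nonunitalPolynomials {p : k[X]} (hp : p ∈ nonunitalPolynomials k) {i : ℕ}
    (hi : 1 ≤ i) : p ^ i ∈ nonunitalPolynomials k := by
  rw [mem_nonunitalPolynomials_iff] at hp ⊢
  rw [coeff_zero_eq_eval_zero, eval_pow, ← coeff_zero_eq_eval_zero, hp,
    zero_pow (Nat.one_le_iff_ne_zero.mp hi)]

variable {M : Submodule k k[X]}

theorem LinearMap.apply_mem_of_apply_X_pow_mem (f : k[X] →ₗ[k] k[X])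
    (hf : ∀ t, 1 ≤ t → f (X ^ t) ∈ M)
    {p : k[X]} (hp : p ∈ nonunitalPolynomials k) : f p ∈ M :=
  (map_span_le f _ M).mpr (Set.forall_mem_image.mpr hf) (mem_map_of_mem hp)

theorem LinearMap.apply_mem_of_apply_X_pow_mem₂ (B : k[X] →ₗ[k] k[X] →ₗ[k] k[X])
    (hB : ∀ s t, 1 ≤ s → 1 ≤ t → B (X ^ s) (X ^ t) ∈ M) {a b : k[X]}
    (ha : a ∈ nonunitalPolynomials k) (hb : b ∈ nonunitalPolynomials k) : B a b ∈ M := by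
  refine map₂_le.mp ?_ a ha b hb
  rw [nonunitalPolynomials, map₂_span_span, span_le]
  rintro _ ⟨_, ⟨s, hs, rfl⟩, _, ⟨t, ht, rfl⟩, rfl⟩
  exact hB s t hs ht

end NonunitalPolynomials

theorem expand_add_mul_add {R : Type*} [CommSemiring R] (r : ℕ) (a b : R[X]) :
    expand R r (a + b) * (a + b) =
      expand R r a * a + (expand R r a * b + a * expand R r b) + expand R r b * b := by
  rw [map_add]; ring

section Expand

variable {k : Type*} [Field k] {M : Submodule k k[X]} {r : ℕ}

theorem add_expand_mem (hM : ∀ t, 1 ≤ t → (X : k[X]) ^ t + X ^ (r * t) ∈ M) {p : k[X]}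
    (hp : p ∈ nonunitalPolynomials k) : p + expand k r p ∈ M :=
  (LinearMap.id + (expand k r).toLinearMap).apply_mem_of_apply_X_pow_mem
    (fun t ht => by simpa [← pow_mul, mul_comm] using hM t ht) hp

theorem X_pow_add_X_pow_mem (hB : ∀ t, 1 ≤ t → (X : k[X]) ^ ((r + 1) * t) ∈ M)
    (hC : ∀ i j, 1 ≤ j → j < i → (X : k[X]) ^ (r * i + j) + X ^ (i + r * j) ∈ M)
    {s t : ℕ} (hs : 1 ≤ s) (ht : 1 ≤ t) :
    (X : k[X]) ^ (r * s + t) + X ^ (s + r * t) ∈ M := by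
  rcases lt_trichotomy s t with hst | rfl | hts
  · simpa only [add_comm] using hC t s hs hst
  · have hdiag : (X : k[X]) ^ (r * s + s) + X ^ (s + r * s) = (2 : k) • X ^ ((r + 1) * s) := by
      rw [two_smul]; ring_nf
    rw [hdiag]
    exact M.smul_mem _ (hB s hs)
  · exact hC s t ht hts

theorem expand_mul_add_mul_expand_mem (hB : ∀ t, 1 ≤ t → (X : k[X]) ^ ((r + 1) * t) ∈ M)
    (hC : ∀ i j, 1 ≤ j → j < i → (X : k[X]) ^ (r * i + j) + X ^ (i + r * j) ∈ M)
    {a b : k[X]} (ha : a ∈ nonunitalPolynomials k) (hb : b ∈ nonunitalPolynomials k) :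
    expand k r a * b + a * expand k r b ∈ M := by
  let mul := LinearMap.mul k k[X]
  refine (mul.compl₁₂ (expand k r).toLinearMap LinearMap.id +
    mul.compl₁₂ LinearMap.id (expand k r).toLinearMap).apply_mem_of_apply_X_pow_mem₂
      (fun s t hs ht => ?_) ha hb
  simpa [mul, ← pow_mul, ← pow_add, mul_comm, add_comm] using X_pow_add_X_pow_mem hB hC hs ht

theorem expand_mul_self_mem (hB : ∀ t, 1 ≤ t → (X : k[X]) ^ ((r + 1) * t) ∈ M)
    (hC : ∀ i j, 1 ≤ j → j < i → (X : k[X]) ^ (r * i + j) + X ^ (i + r * j) ∈ M)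
    {p : k[X]} (hp : p ∈ nonunitalPolynomials k) : expand k r p * p ∈ M := by
  induction hp using span_induction with
  | mem f hf =>
    obtain ⟨t, ht, rfl⟩ := hf
    convert hB t ht using 1
    rw [map_pow, expand_X, ← pow_mul, ← pow_add]; ring_nf
  | zero => simp
  | add a b ha hb iha ihb =>
    rw [expand_add_mul_add]
    exact M.add_mem (M.add_mem iha (expand_mul_add_mul_expand_mem hB hC ha hb)) ihb
  | smul c a _ ih =>
    rw [map_smul, smul_mul_smul_comm]
    exact M.smul_mem _ ih

end Expand

theorem FiniteField.expand_pow_of_card_eq {k : Type*} [Field k] [Fintype k] {q : ℕ}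
    (hq : Fintype.card k = q) (n : ℕ) (f : k[X]) : expand k (q ^ n) f = f ^ q ^ n := by
  subst hq
  induction n with
  | zero => simp
  | succ n ih => rw [pow_succ', expand_mul, ih, FiniteField.expand_card, ← pow_mul, mul_comm]

/-- The proposed spanning set of `Wₙ`, with `r` standing for `qⁿ`. -/
def spanningSet (k : Type*) [Field k] (q r : ℕ) : Set k[X] :=
  {f | ∃ i : ℕ, 1 ≤ i ∧ f = X ^ i + X ^ (q * i)} ∪
    {f | ∃ i : ℕ, 1 ≤ i ∧ f = X ^ ((r + 1) * i)} ∪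
    {f | ∃ i j : ℕ, 1 ≤ j ∧ j < i ∧ f = X ^ (r * i + j) + X ^ (i + r * j)}

theorem spanningSet_subset_nonunitalPolynomials {k : Type*} [Field k] {q : ℕ} (hq : 1 ≤ q)
    (r : ℕ) : spanningSet k q r ⊆ nonunitalPolynomials k := by
  have hX : ∀ t, 1 ≤ t → (X : k[X]) ^ t ∈ nonunitalPolynomials k :=
    fun t ht => subset_span ⟨t, ht, rfl⟩
  rintro _ ((⟨i, hi, rfl⟩ | ⟨i, hi, rfl⟩) | ⟨i, j, hj, hji, rfl⟩)
  · exact add_mem (hX i hi) (hX _ (Nat.mul_pos hq hi))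
  · exact hX _ (Nat.mul_pos r.succ_pos hi)
  · exact add_mem (hX _ (by omega)) (hX _ (by omega))

theorem generators_subset_span_spanningSet {k : Type*} [Field k] (q r : ℕ) :
    {X + X ^ q, X ^ (r + 1)} ⊆ (span k (spanningSet k q r) : Set k[X]) := by
  rintro _ (rfl | rfl)
  · exact subset_span (Or.inl (Or.inl ⟨1, le_rfl, by simp⟩))
  · exact subset_span (Or.inl (Or.inr ⟨1, le_rfl, by simp⟩))

section FiniteField

variable {k : Type*} [Field k] [Fintype k] {q : ℕ}

theorem isTSpace_span_spanningSet (hq : Fintype.card k = q) (n : ℕ) :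
    IsTSpace k (span k (spanningSet k q (q ^ n))) := by
  set M := span k (spanningSet k q (q ^ n))
  have hA : ∀ t, 1 ≤ t → (X : k[X]) ^ t + X ^ (q * t) ∈ M :=
    fun t ht => subset_span (.inl (.inl ⟨t, ht, rfl⟩))
  have hB : ∀ t, 1 ≤ t → (X : k[X]) ^ ((q ^ n + 1) * t) ∈ M :=
    fun t ht => subset_span (.inl (.inr ⟨t, ht, rfl⟩))
  have hC : ∀ i j, 1 ≤ j → j < i →
      (X : k[X]) ^ (q ^ n * i + j) + X ^ (i + q ^ n * j) ∈ M :=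
    fun i j hj hji => subset_span (.inr ⟨i, j, hj, hji, rfl⟩)
  refine ⟨fun p hp => ?_, fun p hp g hg => ?_⟩
  · exact mem_nonunitalPolynomials_iff.mp
      (span_le.mpr (spanningSet_subset_nonunitalPolynomials (hq ▸ Fintype.card_pos) _) hp)
  · have hg : ∀ i, 1 ≤ i → g ^ i ∈ nonunitalPolynomials k := fun i =>
      pow_mem_nonunitalPolynomials (mem_nonunitalPolynomials_iff.mpr hg)
    refine (map_span_le (aeval g).toLinearMap _ M).mpr ?_ (mem_map_of_mem hp)
    rintro _ ((⟨i, hi, rfl⟩ | ⟨i, hi, rfl⟩) | ⟨i, j, hj, hji, rfl⟩) <;>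
      simp only [AlgHom.toLinearMap_apply, ← comp_eq_aeval, add_comp, X_pow_comp]
    · rw [mul_comm, pow_mul, ← pow_one q, ← FiniteField.expand_pow_of_card_eq hq, pow_one]
      exact add_expand_mem hA (hg i hi)
    · rw [mul_comm, pow_mul, pow_succ, ← FiniteField.expand_pow_of_card_eq hq]
      exact expand_mul_self_mem hB hC (hg i hi)
    · rw [pow_add, pow_add, pow_mul', pow_mul', ← FiniteField.expand_pow_of_card_eq hq,
        ← FiniteField.expand_pow_of_card_eq hq]
      exact expand_mul_add_mul_expand_mem hB hC (hg i (by omega)) (hg j hj)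

theorem spanningSet_subset_TSpaceGen (hq : Fintype.card k = q) (n : ℕ) :
    spanningSet k q (q ^ n) ⊆ TSpaceGen k {X + X ^ q, X ^ (q ^ n + 1)} := by
  have hX : ∀ t, 1 ≤ t → ((X : k[X]) ^ t).coeff 0 = 0 :=
    fun t ht => by rw [coeff_X_pow, if_neg (by omega)]
  set S : Set k[X] := {X + X ^ q, X ^ (q ^ n + 1)}
  have hS₁ : X + X ^ q ∈ S := Set.mem_insert _ _
  have hS₂ : X ^ (q ^ n + 1) ∈ S := Set.mem_insert_of_mem _ rfl
  have hB : ∀ t, 1 ≤ t → (X : k[X]) ^ ((q ^ n + 1) * t) ∈ TSpaceGen k S := fun t ht => by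
    simpa [← pow_mul, mul_comm] using comp_mem_TSpaceGen hS₂ (hX t ht)
  rintro _ ((⟨i, hi, rfl⟩ | ⟨i, hi, rfl⟩) | ⟨i, j, hj, hji, rfl⟩)
  · simpa [← pow_mul, mul_comm] using comp_mem_TSpaceGen hS₁ (hX i hi)
  · exact hB i hi
  · have hij : ((X : k[X]) ^ i + X ^ j).coeff 0 = 0 := by
      rw [coeff_add, hX i (by omega), hX j hj, add_zero]
    have e : (X : k[X]) ^ (q ^ n * i + j) + X ^ (i + q ^ n * j) =
        (X ^ (q ^ n + 1)).comp (X ^ i + X ^ j) - X ^ ((q ^ n + 1) * i) - X ^ ((q ^ n + 1) * j) := by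
      rw [X_pow_comp, pow_succ, ← FiniteField.expand_pow_of_card_eq hq, expand_add_mul_add]
      simp only [map_pow, expand_X, ← pow_mul, ← pow_add]
      ring_nf
    rw [e]
    exact sub_mem (sub_mem (comp_mem_TSpaceGen hS₂ hij) (hB i (by omega))) (hB j hj)

end FiniteField

theorem Wn_spanning_set_general (k : Type*) [Field k] [Fintype k] (q : ℕ)
    (hq : Fintype.card k = q) (n : ℕ) :
    TSpaceGen k {Polynomial.X + Polynomial.X ^ q, Polynomial.X ^ (q ^ n + 1)} =
      Submodule.span k
        ({f : Polynomial k | ∃ i : ℕ, 1 ≤ i ∧ f = Polynomial.X ^ i + Polynomial.X ^ (q * i)} ∪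
         {f : Polynomial k | ∃ i : ℕ, 1 ≤ i ∧ f = Polynomial.X ^ ((q ^ n + 1) * i)} ∪
         {f : Polynomial k | ∃ i j : ℕ, 1 ≤ j ∧ j < i ∧
            f = Polynomial.X ^ (q ^ n * i + j) + Polynomial.X ^ (i + q ^ n * j)}) :=
  le_antisymm
    (TSpaceGen_le (isTSpace_span_spanningSet hq n) (generators_subset_span_spanningSet q _))
    (span_le.mpr (spanningSet_subset_TSpaceGen hq n))

/-- For a finite field `k` with `q` elements of characteristic 2 and `n ≥ 1`, the
T-space `Wₙ` generated by `{x + x^q, x^(qⁿ+1)}` is the `k`-linear span of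
`{xⁱ + x^(qi) : i ≥ 1} ∪ {x^((qⁿ+1)i) : i ≥ 1} ∪ {x^(qⁿi+j) + x^(i+qⁿj) : i > j ≥ 1}`. -/
theorem Wn_spanning_set (k : Type*) [Field k] [Fintype k] (q : ℕ)
    (hq : Fintype.card k = q) (h2 : ringChar k = 2) (n : ℕ) (hn : 1 ≤ n) :
    TSpaceGen k {Polynomial.X + Polynomial.X ^ q, Polynomial.X ^ (q ^ n + 1)} =
      Submodule.span k
        ({f : Polynomial k | ∃ i : ℕ, 1 ≤ i ∧ f = Polynomial.X ^ i + Polynomial.X ^ (q * i)} ∪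
         {f : Polynomial k | ∃ i : ℕ, 1 ≤ i ∧ f = Polynomial.X ^ ((q ^ n + 1) * i)} ∪
         {f : Polynomial k | ∃ i j : ℕ, 1 ≤ j ∧ j < i ∧
            f = Polynomial.X ^ (q ^ n * i + j) + Polynomial.X ^ (i + q ^ n * j)}) :=
  Wn_spanning_set_general k q hq n
end

section
/- Let k be the field with 2 elements, and let W_1 denote the T-space of k[x]_0 generated by {x + x², x³}. Then W_1 is a maximal T-space of k[x]_0: W_1 is proper (x ∉ W_1), and every T-space of k[x]_0 that properly contains W_1 contains x. -/
/-!
Modulo `W₁` every monomial `x^n` (`n ≥ 1`) is `0` if `3 ∣ n` and `x` otherwise. Substituting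
`x^n` into the generators puts `x^n + x^{2n}` and `x^{3n}` into `W₁`, and substituting
`x^a + x^b` into `x³` puts `x^{a+2b} + x^{2a+b}` into `W₁` (the middle coefficients `3` are `1`
in characteristic 2); with `a = 1` these relations lower every exponent prime to 3. Hence
`k[x]₀ = W₁ + k·x`, so any T-space strictly containing `W₁` contains `x`.

For `x ∉ W₁`, take a root `ω ∈ 𝔽₄` of `x² + x + 1`. The polynomials `p ∈ 𝔽₂[x]₀` with
`p(ω) ∈ 𝔽₂` form a T-space: `g(ω)` is either in `𝔽₂` or one of the conjugates `ω, ω²`, and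
`p(ω²) = p(ω)²`. This T-space contains `x + x²` and `x³` (as `ω + ω² = ω³ = 1`) but not `x`.
-/

open Polynomial

theorem Polynomial.coeff_zero_comp {R : Type*} [CommSemiring R] {p g : R[X]}
    (hg : g.coeff 0 = 0) : (p.comp g).coeff 0 = p.coeff 0 := by
  rw [coeff_zero_eq_eval_zero, eval_comp, ← coeff_zero_eq_eval_zero, hg,
    coeff_zero_eq_eval_zero]

section TSpace

variable {k : Type*} [Field k]

theorem isTSpace_ker_lcoeff_zero : IsTSpace k (LinearMap.ker (lcoeff k 0)) :=
  ⟨fun _ hp ↦ hp, fun _ hp _ hg ↦ (coeff_zero_comp hg).trans hp⟩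

theorem subset_tSpaceGen (S : Set k[X]) : S ⊆ TSpaceGen k S :=
  fun _ hp ↦ Submodule.mem_sInf.mpr fun _ hV ↦ hV.2 hp

theorem tSpaceGen_le {S : Set k[X]} {V : Submodule k k[X]} (hV : IsTSpace k V)
    (hS : S ⊆ V) : TSpaceGen k S ≤ V :=
  sInf_le ⟨hV, hS⟩

theorem isTSpace_tSpaceGen {S : Set k[X]} (hS : ∀ p ∈ S, p.coeff 0 = 0) :
    IsTSpace k (TSpaceGen k S) := by
  refine ⟨fun p hp ↦ tSpaceGen_le isTSpace_ker_lcoeff_zero hS hp, fun p hp g hg ↦ ?_⟩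
  exact Submodule.mem_sInf.mpr fun V hV ↦ hV.1.2 p (Submodule.mem_sInf.mp hp V hV) g hg

end TSpace

theorem Polynomial.mem_of_forall_X_pow_mem {R : Type*} [Semiring R] {M : Submodule R R[X]}
    (hM : ∀ n ≠ 0, X ^ n ∈ M) {p : R[X]} (hp : p.coeff 0 = 0) : p ∈ M := by
  rw [p.as_sum_support_C_mul_X_pow]
  refine Submodule.sum_mem _ fun n hn ↦ ?_
  have hn0 : n ≠ 0 := by rintro rfl; exact mem_support_iff.mp hn hp
  rw [← smul_eq_C_mul]
  exact M.smul_mem _ (hM n hn0)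

theorem X_mem_of_lt_of_X_pow_mem_sup {k : Type*} [Field k] {W U : Submodule k k[X]}
    (hW : ∀ n ≠ 0, X ^ n ∈ W ⊔ k ∙ X) (hU : IsTSpace k U) (hlt : W < U) : X ∈ U := by
  obtain ⟨p, hpU, hpW⟩ := SetLike.exists_of_lt hlt
  obtain ⟨w, hw, y, hy, rfl⟩ := Submodule.mem_sup.mp (mem_of_forall_X_pow_mem hW (hU.1 p hpU))
  obtain ⟨c, rfl⟩ := Submodule.mem_span_singleton.mp hy
  have hc : c ≠ 0 := by rintro rfl; exact hpW (by simpa using hw)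
  have hcX : c • X ∈ U := by simpa using U.sub_mem hpU (hlt.le hw)
  simpa [hc] using U.smul_mem c⁻¹ hcX

section CharTwo

variable {V : Submodule (ZMod 2) (ZMod 2)[X]}

theorem X_pow_add_X_pow_two_mul_mem (hV : IsTSpace (ZMod 2) V) (h₁ : X + X ^ 2 ∈ V) {n : ℕ}
    (hn : n ≠ 0) : X ^ n + X ^ (2 * n) ∈ V := by
  simpa [← pow_mul, mul_comm] using hV.2 _ h₁ (X ^ n) (by simp [coeff_X_pow, hn.symm])

theorem X_pow_three_mul_mem (hV : IsTSpace (ZMod 2) V) (h₃ : X ^ 3 ∈ V) {n : ℕ} (hn : n ≠ 0) :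
    X ^ (3 * n) ∈ V := by
  simpa [← pow_mul, mul_comm] using hV.2 _ h₃ (X ^ n) (by simp [coeff_X_pow, hn.symm])

theorem X_pow_add_two_mul_add_X_pow_two_mul_add_mem (hV : IsTSpace (ZMod 2) V)
    (h₃ : X ^ 3 ∈ V) {a b : ℕ} (ha : a ≠ 0) (hb : b ≠ 0) :
    X ^ (a + 2 * b) + X ^ (2 * a + b) ∈ V := by
  have hcube := hV.2 _ h₃ (X ^ a + X ^ b) (by simp [coeff_X_pow, ha.symm, hb.symm])
  have hsum : (X : (ZMod 2)[X]) ^ (a + 2 * b) + X ^ (2 * a + b) =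
      (X ^ 3).comp (X ^ a + X ^ b) - X ^ (3 * a) - X ^ (3 * b) := by
    rw [X_pow_comp]
    linear_combination
      (-X ^ (a + 2 * b) - X ^ (2 * a + b)) * CharTwo.two_eq_zero (R := (ZMod 2)[X])
  rw [hsum]
  exact V.sub_mem (V.sub_mem hcube (X_pow_three_mul_mem hV h₃ ha)) (X_pow_three_mul_mem hV h₃ hb)

theorem X_pow_add_X_mem (hV : IsTSpace (ZMod 2) V) (h₁ : X + X ^ 2 ∈ V) (h₃ : X ^ 3 ∈ V)
    {n : ℕ} (hn : ¬ 3 ∣ n) : X ^ n + X ∈ V := by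
  induction n using Nat.strong_induction_on with
  | _ n ih =>
  obtain ⟨m, rfl | rfl⟩ := Nat.even_or_odd' n
  · have hm : m ≠ 0 := by omega
    have hsplit : (X : (ZMod 2)[X]) ^ (2 * m) + X = (X ^ m + X ^ (2 * m)) + (X ^ m + X) := by
      linear_combination (-X ^ m) * CharTwo.two_eq_zero (R := (ZMod 2)[X])
    rw [hsplit]
    exact add_mem (X_pow_add_X_pow_two_mul_mem hV h₁ hm) (ih m (by omega) (by omega))
  · obtain rfl | rfl | hm := (by omega : m = 0 ∨ m = 1 ∨ 2 ≤ m)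
    · simp [CharTwo.add_self_eq_zero]
    · omega
    · have hsplit : (X : (ZMod 2)[X]) ^ (2 * m + 1) + X =
          (X ^ (1 + 2 * m) + X ^ (2 * 1 + m)) + (X ^ (m + 2) + X) := by
        linear_combination (-X ^ (m + 2)) * CharTwo.two_eq_zero (R := (ZMod 2)[X])
      rw [hsplit]
      exact add_mem (X_pow_add_two_mul_add_X_pow_two_mul_add_mem hV h₃ one_ne_zero (by omega))
        (ih (m + 2) (by omega) (by omega))

theorem X_pow_mem_sup_span_X (hV : IsTSpace (ZMod 2) V) (h₁ : X + X ^ 2 ∈ V) (h₃ : X ^ 3 ∈ V)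
    {n : ℕ} (hn : n ≠ 0) : X ^ n ∈ V ⊔ (ZMod 2) ∙ X := by
  by_cases h3n : 3 ∣ n
  · obtain ⟨m, rfl⟩ := h3n
    exact Submodule.mem_sup_left (X_pow_three_mul_mem hV h₃ (by omega))
  · have hsplit : (X : (ZMod 2)[X]) ^ n = (X ^ n + X) + X := by
      linear_combination (-X) * CharTwo.two_eq_zero (R := (ZMod 2)[X])
    rw [hsplit]
    exact add_mem (Submodule.mem_sup_left (X_pow_add_X_mem hV h₁ h₃ h3n))
      (Submodule.mem_sup_right (Submodule.mem_span_singleton_self X))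

end CharTwo

theorem ZMod.aeval_pow_card {p : ℕ} [Fact p.Prime] {A : Type*} [CommSemiring A]
    [Algebra (ZMod p) A] (f : (ZMod p)[X]) (t : A) : aeval t f ^ p = aeval (t ^ p) f := by
  rw [← map_pow, ← ZMod.expand_card, expand_aeval]

local notation "𝔽₄" => GaloisField 2 2

theorem GaloisField.pow_four (t : 𝔽₄) : t ^ 4 = t := by
  have : Fintype 𝔽₄ := Fintype.ofFinite _
  have hcard : Fintype.card 𝔽₄ = 4 := by
    rw [← Nat.card_eq_fintype_card, GaloisField.card 2 2 two_ne_zero]; rfl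
  simpa [hcard] using FiniteField.pow_card t

theorem GaloisField.exists_sq_add_self_add_one_eq_zero : ∃ ω : 𝔽₄, ω ^ 2 + ω + 1 = 0 := by
  have : Fintype 𝔽₄ := Fintype.ofFinite _
  classical
  have hcard : ({0, 1} : Finset 𝔽₄).card < (Finset.univ : Finset 𝔽₄).card := by
    rw [Finset.card_pair zero_ne_one, Finset.card_univ, ← Nat.card_eq_fintype_card,
      GaloisField.card 2 2 two_ne_zero]
    norm_num
  obtain ⟨t, -, ht⟩ := Finset.exists_mem_notMem_of_card_lt_card hcard
  simp only [Finset.mem_insert, Finset.mem_singleton, not_or] at ht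
  have hfactor : t * (t - 1) * (t ^ 2 + t + 1) = 0 := by
    linear_combination GaloisField.pow_four t
  exact ⟨t, (mul_eq_zero.mp hfactor).resolve_left
    (mul_ne_zero ht.1 (sub_ne_zero.mpr ht.2))⟩

section PrimitiveCubeRoot

variable {ω : 𝔽₄}

theorem mem_bot_or_eq_or_eq_sq (hω : ω ^ 2 + ω + 1 = 0) (t : 𝔽₄) :
    t ∈ (⊥ : Subalgebra (ZMod 2) 𝔽₄) ∨ t = ω ∨ t = ω ^ 2 := by
  have hfactor : t * (t - 1) * ((t - ω) * (t - ω ^ 2)) = 0 := by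
    linear_combination GaloisField.pow_four t - (t ^ 2 - t) * (t + 1 - ω) * hω
  rcases mul_eq_zero.mp hfactor with h | h
  · refine Or.inl ?_
    rcases mul_eq_zero.mp h with h | h
    · exact ⟨0, by simp [h]⟩
    · exact ⟨1, by simp [sub_eq_zero.mp h]⟩
  · rcases mul_eq_zero.mp h with h | h
    · exact Or.inr (Or.inl (sub_eq_zero.mp h))
    · exact Or.inr (Or.inr (sub_eq_zero.mp h))

noncomputable def primeFieldValued (ω : 𝔽₄) : Submodule (ZMod 2) (ZMod 2)[X] :=
  LinearMap.ker (lcoeff (ZMod 2) 0) ⊓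
    (Subalgebra.toSubmodule ⊥).comap (aeval ω).toLinearMap

theorem mem_primeFieldValued {p : (ZMod 2)[X]} :
    p ∈ primeFieldValued ω ↔ p.coeff 0 = 0 ∧ aeval ω p ∈ (⊥ : Subalgebra (ZMod 2) 𝔽₄) :=
  Iff.rfl

theorem isTSpace_primeFieldValued (hω : ω ^ 2 + ω + 1 = 0) :
    IsTSpace (ZMod 2) (primeFieldValued ω) := by
  refine ⟨fun p hp ↦ hp.1, fun p hp g hg ↦ ?_⟩
  obtain ⟨hp₀, hpω⟩ := mem_primeFieldValued.mp hp
  refine mem_primeFieldValued.mpr ⟨(coeff_zero_comp hg).trans hp₀, ?_⟩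
  rw [aeval_comp]
  rcases mem_bot_or_eq_or_eq_sq hω (aeval ω g) with hbot | hgω | hgω
  · obtain ⟨c, hc⟩ := Algebra.mem_bot.mp hbot
    rw [← hc, aeval_algebraMap_apply_eq_algebraMap_eval]
    exact Subalgebra.algebraMap_mem _ _
  · rw [hgω]
    exact hpω
  · rw [hgω, ← ZMod.aeval_pow_card]
    exact pow_mem hpω 2

theorem generators_subset_primeFieldValued (hω : ω ^ 2 + ω + 1 = 0) :
    {X + X ^ 2, X ^ 3} ⊆ (primeFieldValued ω : Set (ZMod 2)[X]) := by
  have hcube : ω ^ 3 = 1 := by linear_combination (ω - 1) * hω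
  rintro p (rfl | rfl) <;> refine mem_primeFieldValued.mpr ⟨by simp [coeff_X_pow], ?_⟩
  · rw [map_add, map_pow, aeval_X, (by linear_combination hω : ω + ω ^ 2 = -1)]
    exact neg_mem (one_mem _)
  · rw [map_pow, aeval_X, hcube]
    exact one_mem _

theorem X_notMem_primeFieldValued (hω : ω ^ 2 + ω + 1 = 0) : X ∉ primeFieldValued ω := by
  rintro ⟨-, c, hc⟩
  have hfixed : ω ^ 2 = ω := by
    rw [show ω = algebraMap (ZMod 2) 𝔽₄ c from (hc.trans (aeval_X ω)).symm, ← map_pow,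
      ZMod.pow_card]
  exact one_ne_zero (by
    linear_combination hω - hfixed - ω * CharTwo.two_eq_zero (R := 𝔽₄) : (1 : 𝔽₄) = 0)

end PrimitiveCubeRoot

/-- Over the field with 2 elements, the T-space `W₁` generated by `{x + x², x³}` is a
maximal T-space of `k[x]₀`. -/
theorem W1_isMaximal :
    IsTSpace (ZMod 2) (TSpaceGen (ZMod 2) {Polynomial.X + Polynomial.X ^ 2, Polynomial.X ^ 3}) ∧
      Polynomial.X ∉
        TSpaceGen (ZMod 2) {Polynomial.X + Polynomial.X ^ 2, Polynomial.X ^ 3} ∧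
      ∀ U : Submodule (ZMod 2) (Polynomial (ZMod 2)), IsTSpace (ZMod 2) U →
        TSpaceGen (ZMod 2) {Polynomial.X + Polynomial.X ^ 2, Polynomial.X ^ 3} < U →
        Polynomial.X ∈ U := by
  have hgen := subset_tSpaceGen (k := ZMod 2) {X + X ^ 2, X ^ 3}
  have hW : IsTSpace (ZMod 2) (TSpaceGen (ZMod 2) {X + X ^ 2, X ^ 3}) :=
    isTSpace_tSpaceGen (by rintro p (rfl | rfl) <;> simp [coeff_X_pow])
  obtain ⟨ω, hω⟩ := GaloisField.exists_sq_add_self_add_one_eq_zero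
  refine ⟨hW, fun hX ↦ ?_, fun U hU hlt ↦ ?_⟩
  · exact X_notMem_primeFieldValued hω
      (tSpaceGen_le (isTSpace_primeFieldValued hω) (generators_subset_primeFieldValued hω) hX)
  · exact X_mem_of_lt_of_X_pow_mem_sup
      (fun n hn ↦ X_pow_mem_sup_span_X hW (hgen (by simp)) (hgen (by simp)) hn) hU hlt
end

section
/- Let k be a finite field with q elements, let X be a nonempty type, and fix x ∈ X. Let W = k·1 + T^{(2)} + I, where k·1 is the k-span of the identity of k⟨X⟩ and I is the T-ideal of k⟨X⟩ generated by ι(x) − ι(x)^q. Then W is a maximal T-space of k⟨X⟩: W ≠ k⟨X⟩, and every T-space U of k⟨X⟩ with W ⊊ U satisfies U = k⟨X⟩. -/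
/-!
Let `evalₗ k X` send `f ∈ k⟨X⟩` to the function `k^X → k` it defines. Its kernel is exactly
`T⁽²⁾ + I`: modulo `T⁽²⁾` an element is its commutative image in `k[X]`, and a polynomial
vanishing on all of `k^X` lies in the ideal of the field equations `X_y^q - X_y` (reduce every
exponent below `q`, then use that a reduced polynomial is determined by its values). Hence `W`
is the set of elements whose function is constant, a proper T-space since `x` is not constant.

If a T-space `U ⊋ W` contains `u` taking values `a ≠ b` at points `p₀, p₁`, the substitution
`y ↦ p₀ y + (p₁ y - p₀ y) g^(q-1)` sends `u` to `a + (b - a) g^(q-1)` modulo the kernel, so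
`g^(q-1) ∈ U` for every `g`. Lagrange interpolation `f ≡ ∑ c, c (1 - (f - c)^(q-1))` then puts
every `f` in `U`.
-/

/-- A T-space of the free unital associative algebra `k⟨X⟩`: a `k`-submodule invariant
under every `k`-algebra endomorphism of `k⟨X⟩`. -/
def IsTSpaceF (k X : Type*) [Field k] (V : Submodule k (FreeAlgebra k X)) : Prop :=
  ∀ φ : FreeAlgebra k X →ₐ[k] FreeAlgebra k X, ∀ v ∈ V, φ v ∈ V

/-- The T-space of `k⟨X⟩` generated by a set `S`. -/
def TSpaceGenF (k X : Type*) [Field k] (S : Set (FreeAlgebra k X)) :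
    Submodule k (FreeAlgebra k X) :=
  sInf {V | IsTSpaceF k X V ∧ S ⊆ (V : Set (FreeAlgebra k X))}

/-- A T-ideal of `k⟨X⟩`: a two-sided ideal that is also a T-space. -/
def IsTIdealF (k X : Type*) [Field k] (V : Submodule k (FreeAlgebra k X)) : Prop :=
  IsTSpaceF k X V ∧ ∀ a ∈ V, ∀ r : FreeAlgebra k X, r * a ∈ V ∧ a * r ∈ V

/-- The T-ideal of `k⟨X⟩` generated by a set `S`. -/
def TIdealGenF (k X : Type*) [Field k] (S : Set (FreeAlgebra k X)) :
    Submodule k (FreeAlgebra k X) :=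
  sInf {V | IsTIdealF k X V ∧ S ⊆ (V : Set (FreeAlgebra k X))}

/-- `T⁽²⁾`: the smallest T-ideal of `k⟨X⟩` containing all commutators `ab - ba`. -/
def T2 (k X : Type*) [Field k] : Submodule k (FreeAlgebra k X) :=
  sInf {V | IsTIdealF k X V ∧ ∀ a b : FreeAlgebra k X, a * b - b * a ∈ V}

theorem pow_add_one_eq_pow_mod_add_one {M : Type*} [Monoid M] {a : M} {q : ℕ} (ha : a ^ q = a)
    (n : ℕ) : a ^ (n + 1) = a ^ (n % (q - 1) + 1) := by
  suffices h : ∀ t r, a ^ (r + (q - 1) * t + 1) = a ^ (r + 1) by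
    conv_lhs => rw [← Nat.mod_add_div n (q - 1)]
    exact h _ _
  intro t r
  induction t with
  | zero => simp
  | succ t ih =>
    rcases Nat.eq_zero_or_pos q with rfl | hq
    · simp
    calc a ^ (r + (q - 1) * (t + 1) + 1) = a ^ (r + (q - 1) * t) * a ^ q := by
          rw [← pow_add]; congr 1; rw [Nat.mul_succ]; omega
      _ = a ^ (r + 1) := by rw [ha, ← pow_succ, ih]

theorem FiniteField.sum_mul_one_sub_sub_pow_card_sub_one {k : Type*} [Field k] [Fintype k]
    (t : k) : ∑ c : k, c * (1 - (t - c) ^ (Fintype.card k - 1)) = t := by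
  classical
  have hq : Fintype.card k - 1 ≠ 0 := by have := Fintype.one_lt_card (α := k); omega
  calc ∑ c : k, c * (1 - (t - c) ^ (Fintype.card k - 1)) = ∑ c : k, if c = t then c else 0 :=
        Finset.sum_congr rfl fun c _ => by
          rcases eq_or_ne c t with rfl | h
          · simp [zero_pow hq]
          · simp [h, FiniteField.pow_card_sub_one_eq_one _ (sub_ne_zero.mpr h.symm)]
    _ = t := by simp

universe u

namespace MvPolynomial

variable (σ k : Type*) [CommRing k] [Fintype k]

noncomputable def fieldEquationsIdeal : Ideal (MvPolynomial σ k) :=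
  Ideal.span (Set.range fun i => X i ^ Fintype.card k - X i)

variable {σ k}

theorem rename_mem_fieldEquationsIdeal {τ : Type*} (f : σ → τ) {p : MvPolynomial σ k}
    (hp : p ∈ fieldEquationsIdeal σ k) : rename f p ∈ fieldEquationsIdeal τ k := by
  have h := Ideal.mem_map_of_mem (rename f) hp
  rw [fieldEquationsIdeal, Ideal.map_span, ← Set.range_comp] at h
  refine Ideal.span_mono ?_ h
  rintro _ ⟨i, rfl⟩
  exact ⟨f i, by simp⟩

theorem exists_restrictDegree_sub_mem_fieldEquationsIdeal [Nontrivial k]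
    (p : MvPolynomial σ k) :
    ∃ r ∈ restrictDegree σ k (Fintype.card k - 1), p - r ∈ fieldEquationsIdeal σ k := by
  set q := Fintype.card k
  let red : ℕ → ℕ := fun n => if n = 0 then 0 else (n - 1) % (q - 1) + 1
  have hpow (i : σ) (n : ℕ) : Ideal.Quotient.mk (fieldEquationsIdeal σ k) (X i ^ n)
      = Ideal.Quotient.mk (fieldEquationsIdeal σ k) (X i ^ red n) := by
    have hX : (Ideal.Quotient.mk (fieldEquationsIdeal σ k) (X i)) ^ q =
        Ideal.Quotient.mk (fieldEquationsIdeal σ k) (X i) := by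
      rw [← map_pow, Ideal.Quotient.eq]; exact Ideal.subset_span ⟨i, rfl⟩
    rcases n with _ | n
    · rfl
    · simp only [map_pow, red, Nat.add_one_ne_zero, if_false, Nat.add_sub_cancel]
      exact pow_add_one_eq_pow_mod_add_one hX n
  induction p using MvPolynomial.induction_on' with
  | monomial m c =>
    refine ⟨monomial (m.mapRange red rfl) c, ?_, ?_⟩
    · have hq : 1 < q := Fintype.one_lt_card
      rw [mem_restrictDegree]
      intro s hs i
      rw [Finset.mem_singleton.mp (support_monomial_subset hs), Finsupp.mapRange_apply]
      by_cases h : m i = 0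
      · simp [red, h]
      · simp only [red, h, if_false]
        have := Nat.mod_lt (m i - 1) (by omega : 0 < q - 1)
        omega
    · rw [← Ideal.Quotient.eq, monomial_eq, monomial_eq, Finsupp.prod_mapRange_index (by simp),
        map_mul, map_mul, map_finsuppProd, map_finsuppProd]
      exact congrArg _ (Finsupp.prod_congr fun i _ => hpow i (m i))
  | add p₁ p₂ h₁ h₂ =>
    obtain ⟨r₁, hr₁, h₁⟩ := h₁
    obtain ⟨r₂, hr₂, h₂⟩ := h₂
    exact ⟨r₁ + r₂, add_mem hr₁ hr₂, by simpa [add_sub_add_comm] using add_mem h₁ h₂⟩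

section Field

variable {k : Type u} [Field k] [Fintype k]

theorem fieldEquationsIdeal_le_ker_eval (v : σ → k) :
    fieldEquationsIdeal σ k ≤ RingHom.ker (eval v) := by
  rw [fieldEquationsIdeal, Ideal.span_le]
  rintro _ ⟨i, rfl⟩
  simp [FiniteField.pow_card]

theorem mem_fieldEquationsIdeal_of_eval_eq_zero_of_finite {σ : Type u} [Finite σ]
    {p : MvPolynomial σ k} (hp : ∀ v, eval v p = 0) : p ∈ fieldEquationsIdeal σ k := by
  obtain ⟨r, hr, hpr⟩ := exists_restrictDegree_sub_mem_fieldEquationsIdeal p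
  have hr0 : r = 0 := eq_zero_of_eval_eq_zero σ k r (fun v => by
    simpa [hp v] using fieldEquationsIdeal_le_ker_eval v hpr) hr
  simpa [hr0] using hpr

theorem mem_fieldEquationsIdeal_of_eval_eq_zero {p : MvPolynomial σ k} (hp : ∀ v, eval v p = 0) :
    p ∈ fieldEquationsIdeal σ k := by
  obtain ⟨n, f, hf, p, rfl⟩ := exists_fin_rename p
  -- `eq_zero_of_eval_eq_zero` needs the variables in the universe of `k`
  have hp' : rename ULift.up p ∈ fieldEquationsIdeal (ULift.{u} (Fin n)) k :=
    mem_fieldEquationsIdeal_of_eval_eq_zero_of_finite fun v => by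
      simpa [eval_rename, Function.comp_def, hf.extend_apply] using
        hp (Function.extend f (v ∘ ULift.up) 0)
  simpa [rename_rename, Function.comp_def] using
    rename_mem_fieldEquationsIdeal (f ∘ ULift.down) hp'

end Field

end MvPolynomial

section TIdeal

variable {k X : Type*} [Field k]

theorem isTIdealF_sInf {S : Set (Submodule k (FreeAlgebra k X))}
    (hS : ∀ V ∈ S, IsTIdealF k X V) : IsTIdealF k X (sInf S) := by
  simp only [IsTIdealF, IsTSpaceF, Submodule.mem_sInf]
  exact ⟨fun φ v hv V hV => (hS V hV).1 φ v (hv V hV),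
    fun a ha r => ⟨fun V hV => ((hS V hV).2 a (ha V hV) r).1,
      fun V hV => ((hS V hV).2 a (ha V hV) r).2⟩⟩

theorem isTIdealF_T2 : IsTIdealF k X (T2 k X) := isTIdealF_sInf fun _ hV => hV.1

theorem commutator_mem_T2 (a b : FreeAlgebra k X) : a * b - b * a ∈ T2 k X :=
  Submodule.mem_sInf.mpr fun _ hV => hV.2 a b

theorem T2_le {V : Submodule k (FreeAlgebra k X)} (hV : IsTIdealF k X V)
    (h : ∀ a b : FreeAlgebra k X, a * b - b * a ∈ V) : T2 k X ≤ V :=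
  sInf_le ⟨hV, h⟩

theorem isTIdealF_TIdealGenF (S : Set (FreeAlgebra k X)) : IsTIdealF k X (TIdealGenF k X S) :=
  isTIdealF_sInf fun _ hV => hV.1

theorem subset_TIdealGenF (S : Set (FreeAlgebra k X)) : S ⊆ TIdealGenF k X S :=
  fun _ ha => Submodule.mem_sInf.mpr fun _ hV => hV.2 ha

theorem TIdealGenF_le {S : Set (FreeAlgebra k X)} {V : Submodule k (FreeAlgebra k X)}
    (hV : IsTIdealF k X V) (h : S ⊆ V) : TIdealGenF k X S ≤ V :=
  sInf_le ⟨hV, h⟩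

theorem ι_sub_ι_pow_mem_TIdealGenF (n : ℕ) (x y : X) :
    FreeAlgebra.ι k y - FreeAlgebra.ι k y ^ n
      ∈ TIdealGenF k X {FreeAlgebra.ι k x - FreeAlgebra.ι k x ^ n} := by
  have h := (isTIdealF_TIdealGenF _).1 (FreeAlgebra.lift k fun _ => FreeAlgebra.ι k y) _
    (subset_TIdealGenF _ (Set.mem_singleton (FreeAlgebra.ι k x - FreeAlgebra.ι k x ^ n)))
  rwa [map_sub, map_pow, FreeAlgebra.lift_ι_apply] at h

end TIdeal

namespace FreeAlgebra

variable {k X : Type*} [Field k]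

noncomputable def toMvPolynomial : FreeAlgebra k X →ₐ[k] MvPolynomial X k :=
  lift k MvPolynomial.X

theorem toMvPolynomial_surjective :
    Function.Surjective (toMvPolynomial : FreeAlgebra k X →ₐ[k] MvPolynomial X k) := by
  intro p
  induction p using MvPolynomial.induction_on with
  | C a => exact ⟨algebraMap k _ a, by simp⟩
  | add p₁ p₂ h₁ h₂ =>
    obtain ⟨f₁, rfl⟩ := h₁
    obtain ⟨f₂, rfl⟩ := h₂
    exact ⟨f₁ + f₂, map_add _ _ _⟩
  | mul_X p y h =>
    obtain ⟨f, rfl⟩ := h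
    exact ⟨f * ι k y, by simp [toMvPolynomial]⟩

theorem eval_toMvPolynomial (p : X → k) (f : FreeAlgebra k X) :
    MvPolynomial.eval p (toMvPolynomial f) = lift k p f := by
  induction f using FreeAlgebra.induction with
  | grade0 r => simp
  | grade1 y => simp [toMvPolynomial]
  | mul a b ha hb => simp [ha, hb]
  | add a b ha hb => simp [ha, hb]

theorem mem_T2_of_toMvPolynomial_eq_zero {f : FreeAlgebra k X} (hf : toMvPolynomial f = 0) :
    f ∈ T2 k X := by
  let I := TwoSidedIdeal.mk' (T2 k X : Set (FreeAlgebra k X)) (zero_mem _) add_mem neg_mem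
    (fun hy => (isTIdealF_T2.2 _ hy _).1) (fun hx => (isTIdealF_T2.2 _ hx _).2)
  let c := I.ringCon
  -- `k⟨X⟩ ⧸ T⁽²⁾` is commutative, so its quotient map factors through `toMvPolynomial`
  let : CommRing c.Quotient :=
    { (inferInstance : Ring c.Quotient) with
      mul_comm := by
        rintro ⟨a⟩ ⟨b⟩
        exact c.eq.mpr ((I.rel_iff _ _).mpr (by simpa [I] using commutator_mem_T2 a b)) }
  have hmk : (MvPolynomial.aeval fun y => RingCon.mkₐ k c (ι k y)).comp toMvPolynomial
      = RingCon.mkₐ k c := by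
    ext y; simp [toMvPolynomial]
  have h0 : RingCon.mkₐ k c f = RingCon.mkₐ k c 0 := by
    rw [← hmk, AlgHom.comp_apply, hf, map_zero, map_zero]
  simpa [I] using (I.rel_iff _ _).mp (c.eq.mp h0)

variable (k X) in
noncomputable def evalₗ : FreeAlgebra k X →ₗ[k] (X → k) → k :=
  LinearMap.pi fun p => (lift k p).toLinearMap

@[simp]
theorem evalₗ_apply (f : FreeAlgebra k X) (p : X → k) : evalₗ k X f p = lift k p f := rfl

theorem evalₗ_one : evalₗ k X 1 = 1 := by
  ext p; simp

theorem lift_apply_algHom_apply (p : X → k) (φ : FreeAlgebra k X →ₐ[k] FreeAlgebra k X)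
    (f : FreeAlgebra k X) : lift k p (φ f) = lift k (fun y => lift k p (φ (ι k y))) f := by
  have h : lift k (fun y => lift k p (φ (ι k y))) = (lift k p).comp φ :=
    ((lift_unique _ ((lift k p).comp φ)).mp rfl).symm
  rw [h, AlgHom.comp_apply]

end FreeAlgebra

open FreeAlgebra Submodule

section Evaluation

variable {k X : Type*} [Field k]

theorem isTIdealF_ker_evalₗ : IsTIdealF k X (LinearMap.ker (evalₗ k X)) := by
  refine ⟨fun φ v hv => ?_, fun a ha r => ⟨?_, ?_⟩⟩ <;>
    simp only [LinearMap.mem_ker, funext_iff, evalₗ_apply, Pi.zero_apply] at * <;> intro p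
  · rw [lift_apply_algHom_apply]; exact hv _
  · simp [ha p]
  · simp [ha p]

theorem T2_le_ker_evalₗ : T2 k X ≤ LinearMap.ker (evalₗ k X) :=
  T2_le isTIdealF_ker_evalₗ fun a b => by ext p; simp [mul_comm]

theorem one_mem_comap_evalₗ_span_one :
    (1 : FreeAlgebra k X) ∈ (span k {1}).comap (evalₗ k X) := by
  rw [mem_comap, evalₗ_one]
  exact mem_span_singleton_self 1

theorem isTSpaceF_comap_evalₗ_span_one : IsTSpaceF k X ((span k {1}).comap (evalₗ k X)) := by
  intro φ v hv
  obtain ⟨c, hc⟩ := mem_span_singleton.mp hv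
  refine mem_span_singleton.mpr ⟨c, funext fun p => ?_⟩
  rw [evalₗ_apply, lift_apply_algHom_apply, ← evalₗ_apply, ← hc]
  rfl

theorem evalₗ_ι_notMem_span_one (x : X) : evalₗ k X (ι k x) ∉ span k {1} := by
  intro h
  obtain ⟨c, hc⟩ := mem_span_singleton.mp h
  have h0 := congrFun hc 0
  have h1 := congrFun hc 1
  simp only [Pi.smul_apply, Pi.one_apply, smul_eq_mul, mul_one, evalₗ_apply,
    lift_ι_apply] at h0 h1
  exact zero_ne_one (h0.symm.trans h1)

variable [Fintype k]

theorem TIdealGenF_le_ker_evalₗ (x : X) :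
    TIdealGenF k X {ι k x - ι k x ^ Fintype.card k} ≤ LinearMap.ker (evalₗ k X) :=
  TIdealGenF_le isTIdealF_ker_evalₗ <| Set.singleton_subset_iff.mpr <| by
    ext p; simp [FiniteField.pow_card]

theorem exists_mem_TIdealGenF_toMvPolynomial_eq (x : X) {p : MvPolynomial X k}
    (hp : p ∈ MvPolynomial.fieldEquationsIdeal X k) :
    ∃ g ∈ TIdealGenF k X {ι k x - ι k x ^ Fintype.card k}, toMvPolynomial g = p := by
  induction hp using span_induction with
  | mem p hp =>
    obtain ⟨y, rfl⟩ := hp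
    refine ⟨ι k y ^ Fintype.card k - ι k y, ?_, by simp [toMvPolynomial]⟩
    simpa using neg_mem (ι_sub_ι_pow_mem_TIdealGenF (k := k) (Fintype.card k) x y)
  | zero => exact ⟨0, zero_mem _, map_zero _⟩
  | add p₁ p₂ _ _ h₁ h₂ =>
    obtain ⟨g₁, hg₁, rfl⟩ := h₁
    obtain ⟨g₂, hg₂, rfl⟩ := h₂
    exact ⟨g₁ + g₂, add_mem hg₁ hg₂, map_add _ _ _⟩
  | smul r p _ h =>
    obtain ⟨g, hg, rfl⟩ := h
    obtain ⟨f, rfl⟩ := toMvPolynomial_surjective r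
    exact ⟨f * g, ((isTIdealF_TIdealGenF _).2 g hg f).1, map_mul _ _ _⟩

theorem ker_evalₗ_le_T2_sup_TIdealGenF (x : X) :
    LinearMap.ker (evalₗ k X) ≤ T2 k X ⊔ TIdealGenF k X {ι k x - ι k x ^ Fintype.card k} := by
  intro f hf
  obtain ⟨g, hg, hgf⟩ := exists_mem_TIdealGenF_toMvPolynomial_eq x
    (MvPolynomial.mem_fieldEquationsIdeal_of_eval_eq_zero (p := toMvPolynomial f) fun p => by
      rw [eval_toMvPolynomial]; exact congrFun hf p)
  have hfg : f - g ∈ T2 k X :=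
    mem_T2_of_toMvPolynomial_eq_zero (by rw [map_sub, hgf, sub_self])
  exact mem_sup.mpr ⟨f - g, hfg, g, hg, sub_add_cancel f g⟩

end Evaluation

section Maximality

variable {k X : Type*} [Field k] [Fintype k]

theorem span_one_sup_T2_sup_TIdealGenF_eq_comap_evalₗ (x : X) :
    span k {(1 : FreeAlgebra k X)} ⊔ T2 k X ⊔
        TIdealGenF k X {ι k x - ι k x ^ Fintype.card k} = (span k {1}).comap (evalₗ k X) := by
  refine le_antisymm (sup_le (sup_le ?_ ?_) ?_) fun f hf => ?_
  · exact span_le.mpr (Set.singleton_subset_iff.mpr one_mem_comap_evalₗ_span_one)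
  · exact T2_le_ker_evalₗ.trans (LinearMap.ker_le_comap _)
  · exact (TIdealGenF_le_ker_evalₗ x).trans (LinearMap.ker_le_comap _)
  · obtain ⟨c, hc⟩ := mem_span_singleton.mp hf
    have hker : f - c • 1 ∈ LinearMap.ker (evalₗ k X) := by
      rw [LinearMap.mem_ker, map_sub, map_smul, evalₗ_one, hc, sub_self]
    rw [sup_assoc, ← sub_add_cancel f (c • 1)]
    exact add_mem (mem_sup_right (ker_evalₗ_le_T2_sup_TIdealGenF x hker))
      (mem_sup_left (smul_mem _ c (mem_span_singleton_self 1)))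

variable {U : Submodule k (FreeAlgebra k X)}

theorem pow_card_sub_one_mem_of_evalₗ_notMem_span_one (hU : IsTSpaceF k X U)
    (hker : LinearMap.ker (evalₗ k X) ≤ U) (h1 : 1 ∈ U) {u : FreeAlgebra k X} (huU : u ∈ U)
    (hu : evalₗ k X u ∉ span k {1}) (g : FreeAlgebra k X) : g ^ (Fintype.card k - 1) ∈ U := by
  obtain ⟨p₀, p₁, hne⟩ : ∃ p₀ p₁, evalₗ k X u p₀ ≠ evalₗ k X u p₁ := by
    by_contra! h
    exact hu (mem_span_singleton.mpr ⟨evalₗ k X u 0, funext fun p => by simp [h 0 p]⟩)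
  set a := evalₗ k X u p₀
  set b := evalₗ k X u p₁
  let θ : FreeAlgebra k X →ₐ[k] FreeAlgebra k X :=
    lift k fun y => algebraMap k _ (p₀ y) + (p₁ y - p₀ y) • g ^ (Fintype.card k - 1)
  have hθ :
      θ u - a • 1 - (b - a) • g ^ (Fintype.card k - 1) ∈ LinearMap.ker (evalₗ k X) := by
    have hq : Fintype.card k - 1 ≠ 0 := by have := Fintype.one_lt_card (α := k); omega
    rw [LinearMap.mem_ker]
    funext p
    have hθp : lift k p (θ u) = lift k
        (fun y => p₀ y + (p₁ y - p₀ y) * lift k p g ^ (Fintype.card k - 1)) u := by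
      rw [lift_apply_algHom_apply]
      exact congrArg (lift k · u) (funext fun y => by simp [θ])
    simp only [map_sub, map_smul, evalₗ_apply, hθp, Pi.zero_apply]
    rcases eq_or_ne (lift k p g) 0 with h | h
    · simp [h, zero_pow hq, a]
    · simp [h, FiniteField.pow_card_sub_one_eq_one, b]
  have hba : (b - a) • g ^ (Fintype.card k - 1) ∈ U := by
    have := sub_mem (sub_mem (hU θ u huU) (U.smul_mem a h1)) (hker hθ)
    rwa [sub_sub_cancel] at this
  simpa [smul_smul, inv_mul_cancel₀ (sub_ne_zero.mpr hne.symm)] using U.smul_mem (b - a)⁻¹ hba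

theorem eq_top_of_evalₗ_notMem_span_one (hU : IsTSpaceF k X U)
    (hker : LinearMap.ker (evalₗ k X) ≤ U) (h1 : 1 ∈ U) {u : FreeAlgebra k X} (huU : u ∈ U)
    (hu : evalₗ k X u ∉ span k {1}) : U = ⊤ := by
  refine eq_top_iff.mpr fun f _ => ?_
  set e := ∑ c : k, c • (1 - (f - algebraMap k _ c) ^ (Fintype.card k - 1))
  have hf : f - e ∈ LinearMap.ker (evalₗ k X) := by
    rw [LinearMap.mem_ker]
    funext p
    simp [e, FiniteField.sum_mul_one_sub_sub_pow_card_sub_one]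
  have he : e ∈ U := sum_mem fun c _ => U.smul_mem c
    (sub_mem h1 (pow_card_sub_one_mem_of_evalₗ_notMem_span_one hU hker h1 huU hu _))
  simpa using add_mem (hker hf) he

end Maximality

theorem W_isMaximal_unitary_general (k : Type*) [Field k] [Fintype k] (q : ℕ)
    (hq : Fintype.card k = q) (X : Type*) (x : X) :
    IsTSpaceF k X (Submodule.span k {(1 : FreeAlgebra k X)} ⊔ T2 k X ⊔
        TIdealGenF k X {FreeAlgebra.ι k x - (FreeAlgebra.ι k x) ^ q}) ∧
      (Submodule.span k {(1 : FreeAlgebra k X)} ⊔ T2 k X ⊔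
        TIdealGenF k X {FreeAlgebra.ι k x - (FreeAlgebra.ι k x) ^ q}) ≠ ⊤ ∧
      ∀ U : Submodule k (FreeAlgebra k X), IsTSpaceF k X U →
        (Submodule.span k {(1 : FreeAlgebra k X)} ⊔ T2 k X ⊔
          TIdealGenF k X {FreeAlgebra.ι k x - (FreeAlgebra.ι k x) ^ q}) < U →
        U = ⊤ := by
  subst hq
  rw [span_one_sup_T2_sup_TIdealGenF_eq_comap_evalₗ]
  refine ⟨isTSpaceF_comap_evalₗ_span_one,
    fun h => evalₗ_ι_notMem_span_one x (h ▸ mem_top), fun U hU hlt => ?_⟩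
  obtain ⟨u, huU, hu⟩ := SetLike.exists_of_lt hlt
  exact eq_top_of_evalₗ_notMem_span_one hU ((LinearMap.ker_le_comap _).trans hlt.le)
    (hlt.le one_mem_comap_evalₗ_span_one) huU hu

/-- For a finite field `k` with `q` elements, `W = k·1 + T⁽²⁾ + {ι(x) - ι(x)^q}ᵀ` is a
maximal T-space of `k⟨X⟩`. -/
theorem W_isMaximal_unitary (k : Type*) [Field k] [Fintype k] (q : ℕ)
    (hq : Fintype.card k = q) (X : Type*) [Nonempty X] (x : X) :
    IsTSpaceF k X (Submodule.span k {(1 : FreeAlgebra k X)} ⊔ T2 k X ⊔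
        TIdealGenF k X {FreeAlgebra.ι k x - (FreeAlgebra.ι k x) ^ q}) ∧
      (Submodule.span k {(1 : FreeAlgebra k X)} ⊔ T2 k X ⊔
        TIdealGenF k X {FreeAlgebra.ι k x - (FreeAlgebra.ι k x) ^ q}) ≠ ⊤ ∧
      ∀ U : Submodule k (FreeAlgebra k X), IsTSpaceF k X U →
        (Submodule.span k {(1 : FreeAlgebra k X)} ⊔ T2 k X ⊔
          TIdealGenF k X {FreeAlgebra.ι k x - (FreeAlgebra.ι k x) ^ q}) < U →
        U = ⊤ :=
  W_isMaximal_unitary_general k q hq X x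
end
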